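/- arXiv:2601.19284 — 2 statements merged into one kernel-verified Lean document; each statement's English description precedes it below -/
import Mathlib

section
/- Let γ ∈ (0,1], K ∈ S_γ with J_γ(K) > ℓ₀, and set α = ℓ₀/(J_γ(K) − ℓ₀). If γ' > 0 satisfies γ' < (1 + α)·γ, then √γ'·ρ(A − BKC) < 1, i.e., K ∈ S_{γ'} whenever moreover γ' ≤ 1. -/
open Matrix

noncomputable section

/-- Spectral radius of a real square matrix: the largest modulus of a complex eigenvalue. -/
def specRad {n : ℕ} (M : Matrix (Fin n) (Fin n) ℝ) : ℝ :=
  sSup {r : ℝ | ∃ μ ∈ spectrum ℂ (M.map (algebraMap ℝ ℂ)), r = ‖μ‖}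

/-- Spectral (ℓ²→ℓ² operator) norm of a real matrix. -/
def spNorm {a b : ℕ} (M : Matrix (Fin a) (Fin b) ℝ) : ℝ :=
  ‖LinearMap.toContinuousLinearMap (Matrix.toEuclideanLin M)‖

/-- Frobenius norm of a real matrix. -/
def frobNorm {a b : ℕ} (M : Matrix (Fin a) (Fin b) ℝ) : ℝ :=
  Real.sqrt (∑ i, ∑ j, (M i j) ^ 2)

/-- Euclidean norm of a vector. -/
def vecNorm {a : ℕ} (x : Fin a → ℝ) : ℝ :=
  Real.sqrt (∑ i, (x i) ^ 2)

variable {n m p : ℕ}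

/-- Closed-loop matrix `A - BKC`. -/
def Acl (A : Matrix (Fin n) (Fin n) ℝ) (B : Matrix (Fin n) (Fin m) ℝ)
    (C : Matrix (Fin p) (Fin n) ℝ) (K : Matrix (Fin m) (Fin p) ℝ) : Matrix (Fin n) (Fin n) ℝ :=
  A - B * K * C

/-- Membership in the stabilizing set `S_γ`: `√γ · ρ(A − BKC) < 1`. -/
def inS (A : Matrix (Fin n) (Fin n) ℝ) (B : Matrix (Fin n) (Fin m) ℝ)
    (C : Matrix (Fin p) (Fin n) ℝ) (γ : ℝ) (K : Matrix (Fin m) (Fin p) ℝ) : Prop :=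
  Real.sqrt γ * specRad (Acl A B C K) < 1

/-- The solution `P_K(γ) = Σ_{t} γ^t ((A−BKC)ᵀ)^t (Q + CᵀKᵀRKC) (A−BKC)^t` of the
discounted Lyapunov equation. -/
def Pmat (A : Matrix (Fin n) (Fin n) ℝ) (B : Matrix (Fin n) (Fin m) ℝ)
    (C : Matrix (Fin p) (Fin n) ℝ) (Q : Matrix (Fin n) (Fin n) ℝ) (R : Matrix (Fin m) (Fin m) ℝ)
    (γ : ℝ) (K : Matrix (Fin m) (Fin p) ℝ) : Matrix (Fin n) (Fin n) ℝ :=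
  ∑' t : ℕ, γ ^ t • ((Acl A B C K)ᵀ ^ t * (Q + Cᵀ * Kᵀ * R * K * C) * (Acl A B C K) ^ t)

/-- The Gramian `Σ_K(γ) = Σ_{t} γ^t (A−BKC)^t ((A−BKC)ᵀ)^t`. -/
def Smat (A : Matrix (Fin n) (Fin n) ℝ) (B : Matrix (Fin n) (Fin m) ℝ)
    (C : Matrix (Fin p) (Fin n) ℝ) (γ : ℝ) (K : Matrix (Fin m) (Fin p) ℝ) :
    Matrix (Fin n) (Fin n) ℝ :=
  ∑' t : ℕ, γ ^ t • ((Acl A B C K) ^ t * ((Acl A B C K)ᵀ) ^ t)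

/-- The discounted cost `J_γ(K) = Tr(P_K(γ))`. -/
def Jcost (A : Matrix (Fin n) (Fin n) ℝ) (B : Matrix (Fin n) (Fin m) ℝ)
    (C : Matrix (Fin p) (Fin n) ℝ) (Q : Matrix (Fin n) (Fin n) ℝ) (R : Matrix (Fin m) (Fin m) ℝ)
    (γ : ℝ) (K : Matrix (Fin m) (Fin p) ℝ) : ℝ :=
  (Pmat A B C Q R γ K).trace

/-- `E_K = (R + γBᵀP_K(γ)B)KC − γBᵀP_K(γ)A`. -/
def Egrad (A : Matrix (Fin n) (Fin n) ℝ) (B : Matrix (Fin n) (Fin m) ℝ)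
    (C : Matrix (Fin p) (Fin n) ℝ) (Q : Matrix (Fin n) (Fin n) ℝ) (R : Matrix (Fin m) (Fin m) ℝ)
    (γ : ℝ) (K : Matrix (Fin m) (Fin p) ℝ) : Matrix (Fin m) (Fin n) ℝ :=
  (R + γ • (Bᵀ * Pmat A B C Q R γ K * B)) * K * C - γ • (Bᵀ * Pmat A B C Q R γ K * A)

/-- The closed-form gradient `∇J_γ(K) = 2 E_K Σ_K(γ) Cᵀ`. -/
def gradJ (A : Matrix (Fin n) (Fin n) ℝ) (B : Matrix (Fin n) (Fin m) ℝ)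
    (C : Matrix (Fin p) (Fin n) ℝ) (Q : Matrix (Fin n) (Fin n) ℝ) (R : Matrix (Fin m) (Fin m) ℝ)
    (γ : ℝ) (K : Matrix (Fin m) (Fin p) ℝ) : Matrix (Fin m) (Fin p) ℝ :=
  (2 : ℝ) • (Egrad A B C Q R γ K * Smat A B C γ K * Cᵀ)

end

/-!
Let `μ` be an eigenvalue of `A − BKC`. Since `Q + CᵀKᵀRKC ⪰ ℓ₀ I` and `|μ|^t ≤ ‖(A − BKC)^t‖_F`,
the `t`-th term of the series for `P_K(γ)` has trace at least `ℓ₀ (γ|μ|²)^t`. Summing the geometric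
series gives `ℓ₀ / (1 − γ|μ|²) ≤ J_γ(K)`, i.e. `γ|μ|² ≤ 1 − ℓ₀/J_γ(K) = 1/(1 + α)`, so
`γ'|μ|² < (1 + α)γ|μ|² ≤ 1`.
-/

namespace Matrix

variable {ι : Type*} [Fintype ι]

lemma trace_transpose_mul_self (X : Matrix ι ι ℝ) : (Xᵀ * X).trace = ∑ i, ∑ j, X i j ^ 2 := by
  simp only [trace, diag, mul_apply, transpose_apply, sq]
  exact Finset.sum_comm

lemma norm_mulVec_apply_sq_le (N : Matrix ι ι ℝ) (v : ι → ℂ) (i : ι) :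
    ‖(N.map (algebraMap ℝ ℂ) *ᵥ v) i‖ ^ 2 ≤ (∑ j, N i j ^ 2) * ∑ j, ‖v j‖ ^ 2 := by
  have hrow : ‖(N.map (algebraMap ℝ ℂ) *ᵥ v) i‖ ≤ ∑ j, |N i j| * ‖v j‖ := by
    simp only [mulVec, dotProduct, map_apply]
    refine (norm_sum_le _ _).trans_eq ?_
    simp
  calc ‖(N.map (algebraMap ℝ ℂ) *ᵥ v) i‖ ^ 2 ≤ (∑ j, |N i j| * ‖v j‖) ^ 2 :=
        pow_le_pow_left₀ (norm_nonneg _) hrow 2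
    _ ≤ (∑ j, |N i j| ^ 2) * ∑ j, ‖v j‖ ^ 2 := Finset.sum_mul_sq_le_sq_mul_sq _ _ _
    _ = (∑ j, N i j ^ 2) * ∑ j, ‖v j‖ ^ 2 := by simp only [sq_abs]

lemma norm_sq_le_of_mulVec_eq_smul (N : Matrix ι ι ℝ) {μ : ℂ} {v : ι → ℂ} (hv : v ≠ 0)
    (h : N.map (algebraMap ℝ ℂ) *ᵥ v = μ • v) : ‖μ‖ ^ 2 ≤ ∑ i, ∑ j, N i j ^ 2 := by
  have hv_pos : 0 < ∑ j, ‖v j‖ ^ 2 := by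
    obtain ⟨j, hj⟩ := Function.ne_iff.mp hv
    exact Finset.sum_pos' (fun _ _ => sq_nonneg _) ⟨j, Finset.mem_univ j, by positivity⟩
  refine le_of_mul_le_mul_right ?_ hv_pos
  calc ‖μ‖ ^ 2 * ∑ j, ‖v j‖ ^ 2 = ∑ i, ‖(N.map (algebraMap ℝ ℂ) *ᵥ v) i‖ ^ 2 := by
        rw [h]
        simp [mul_pow, Finset.mul_sum]
    _ ≤ ∑ i, (∑ j, N i j ^ 2) * ∑ j, ‖v j‖ ^ 2 :=
        Finset.sum_le_sum fun i _ => norm_mulVec_apply_sq_le N v i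
    _ = (∑ i, ∑ j, N i j ^ 2) * ∑ j, ‖v j‖ ^ 2 := (Finset.sum_mul ..).symm

variable [DecidableEq ι]

lemma norm_sq_le_trace_transpose_mul_self (N : Matrix ι ι ℝ) {μ : ℂ}
    (hμ : μ ∈ spectrum ℂ (N.map (algebraMap ℝ ℂ))) : ‖μ‖ ^ 2 ≤ (Nᵀ * N).trace := by
  rw [← spectrum_toLin', ← Module.End.hasEigenvalue_iff_mem_spectrum] at hμ
  obtain ⟨v, hv⟩ := hμ.exists_hasEigenvector
  rw [trace_transpose_mul_self]
  exact norm_sq_le_of_mulVec_eq_smul N hv.2 (by simpa using hv.apply_eq_smul)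

lemma pow_norm_sq_le_trace (N : Matrix ι ι ℝ) {μ : ℂ}
    (hμ : μ ∈ spectrum ℂ (N.map (algebraMap ℝ ℂ))) (t : ℕ) :
    (‖μ‖ ^ 2) ^ t ≤ (Nᵀ ^ t * N ^ t).trace := by
  have hmap : (N ^ t).map (algebraMap ℝ ℂ) = N.map (algebraMap ℝ ℂ) ^ t := by
    simpa using map_pow (algebraMap ℝ ℂ).mapMatrix N t
  have hμt := spectrum.pow_mem_pow _ t hμ
  rw [← hmap] at hμt
  rw [← transpose_pow, ← pow_mul, mul_comm, pow_mul, ← norm_pow]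
  exact norm_sq_le_trace_transpose_mul_self _ hμt

lemma mul_trace_le_trace_transpose_mul_mul {M : Matrix ι ι ℝ} {ℓ : ℝ}
    (hM : (M - ℓ • 1).PosSemidef) (X : Matrix ι ι ℝ) :
    ℓ * (Xᵀ * X).trace ≤ (Xᵀ * M * X).trace := by
  have h := (hM.conjTranspose_mul_mul_same X).trace_nonneg
  rw [conjTranspose_eq_transpose_of_trivial, mul_sub, sub_mul, trace_sub, mul_smul_comm,
    smul_mul_assoc, mul_one, trace_smul, smul_eq_mul] at h
  linarith

lemma div_one_sub_le_trace_tsum {N M : Matrix ι ι ℝ} {ℓ γ : ℝ} (hℓ : 0 ≤ ℓ) (hγ : 0 ≤ γ)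
    (hM : (M - ℓ • 1).PosSemidef) {μ : ℂ} (hμ : μ ∈ spectrum ℂ (N.map (algebraMap ℝ ℂ)))
    (hq : γ * ‖μ‖ ^ 2 < 1) (hsum : Summable fun t : ℕ => γ ^ t • (Nᵀ ^ t * M * N ^ t)) :
    ℓ / (1 - γ * ‖μ‖ ^ 2) ≤ (∑' t : ℕ, γ ^ t • (Nᵀ ^ t * M * N ^ t)).trace := by
  have hterm (t : ℕ) : ℓ * (γ * ‖μ‖ ^ 2) ^ t ≤ (γ ^ t • (Nᵀ ^ t * M * N ^ t)).trace := by
    rw [trace_smul, smul_eq_mul, ← transpose_pow]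
    calc ℓ * (γ * ‖μ‖ ^ 2) ^ t = γ ^ t * (ℓ * (‖μ‖ ^ 2) ^ t) := by ring
      _ ≤ γ ^ t * (ℓ * ((N ^ t)ᵀ * N ^ t).trace) := by
        gcongr
        rw [transpose_pow]
        exact pow_norm_sq_le_trace N hμ t
      _ ≤ γ ^ t * ((N ^ t)ᵀ * M * N ^ t).trace := by
        gcongr
        exact mul_trace_le_trace_transpose_mul_mul hM _
  have hgeom := (hasSum_geometric_of_lt_one (by positivity) hq).mul_left ℓ
  rw [div_eq_mul_inv]
  exact hasSum_le hterm hgeom (hsum.hasSum.map (traceLinearMap ι ℝ ℝ)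
    (LinearMap.continuous_of_finiteDimensional _))

end Matrix

lemma finite_specRad_set {n : ℕ} (M : Matrix (Fin n) (Fin n) ℝ) :
    {r : ℝ | ∃ μ ∈ spectrum ℂ (M.map (algebraMap ℝ ℂ)), r = ‖μ‖}.Finite := by
  have := (Matrix.finite_spectrum (M.map (algebraMap ℝ ℂ))).image (‖·‖)
  convert this using 1
  ext r
  simp [eq_comm]

lemma norm_le_specRad {n : ℕ} (M : Matrix (Fin n) (Fin n) ℝ) {μ : ℂ}
    (hμ : μ ∈ spectrum ℂ (M.map (algebraMap ℝ ℂ))) : ‖μ‖ ≤ specRad M :=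
  le_csSup (finite_specRad_set M).bddAbove ⟨μ, hμ, rfl⟩

lemma specRad_lt_of_forall_norm_lt {n : ℕ} (M : Matrix (Fin n) (Fin n) ℝ) {c : ℝ} (hc : 0 < c)
    (h : ∀ μ ∈ spectrum ℂ (M.map (algebraMap ℝ ℂ)), ‖μ‖ < c) : specRad M < c := by
  unfold specRad
  rcases Set.eq_empty_or_nonempty {r : ℝ | ∃ μ ∈ spectrum ℂ (M.map (algebraMap ℝ ℂ)), r = ‖μ‖}
    with hempty | hne
  · rwa [hempty, Real.sSup_empty]
  · rw [(finite_specRad_set M).csSup_lt_iff hne]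
    rintro _ ⟨μ, hμ, rfl⟩
    exact h μ hμ

lemma mul_lt_one_of_lt_one_add_div_mul {ℓ J γ γ' x : ℝ} (hJ : ℓ < J) (hx : 0 ≤ x)
    (hq : γ * x < 1) (hbound : ℓ / (1 - γ * x) ≤ J) (hγ' : γ' < (1 + ℓ / (J - ℓ)) * γ) :
    γ' * x < 1 := by
  have hd : 0 < J - ℓ := sub_pos.2 hJ
  have hγ'd : γ' * (J - ℓ) < J * γ := by
    rwa [one_add_div hd.ne', sub_add_cancel, div_mul_eq_mul_div, lt_div_iff₀ hd] at hγ'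
  have hℓJ : ℓ ≤ J * (1 - γ * x) := (div_le_iff₀ (sub_pos.2 hq)).1 hbound
  rcases hx.eq_or_lt with rfl | hx
  · simp
  · refine lt_of_mul_lt_mul_right ?_ hd.le
    nlinarith [mul_lt_mul_of_pos_right hγ'd hx]

section LQR

variable {n m p : ℕ} {A : Matrix (Fin n) (Fin n) ℝ} {B : Matrix (Fin n) (Fin m) ℝ}
  {C : Matrix (Fin p) (Fin n) ℝ} {Q : Matrix (Fin n) (Fin n) ℝ} {R : Matrix (Fin m) (Fin m) ℝ}
  {ℓ₀ : ℝ}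

lemma posSemidef_stageCost_sub (hℓ₀ : 0 ≤ ℓ₀) (hQlb : (Q - ℓ₀ • 1).PosSemidef)
    (hRlb : (R - ℓ₀ • 1).PosSemidef) (K : Matrix (Fin m) (Fin p) ℝ) :
    (Q + Cᵀ * Kᵀ * R * K * C - ℓ₀ • 1).PosSemidef := by
  have hR : R.PosSemidef := by simpa using hRlb.add (PosSemidef.one.smul hℓ₀)
  have hKC := hR.conjTranspose_mul_mul_same (K * C)
  rw [conjTranspose_eq_transpose_of_trivial, transpose_mul] at hKC
  convert hQlb.add hKC using 1
  simp only [Matrix.mul_assoc]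
  abel

lemma div_one_sub_le_Jcost (hℓ₀ : 0 ≤ ℓ₀) (hQlb : (Q - ℓ₀ • 1).PosSemidef)
    (hRlb : (R - ℓ₀ • 1).PosSemidef) {γ : ℝ} (hγ : 0 ≤ γ) {K : Matrix (Fin m) (Fin p) ℝ}
    {μ : ℂ} (hμ : μ ∈ spectrum ℂ ((Acl A B C K).map (algebraMap ℝ ℂ)))
    (hq : γ * ‖μ‖ ^ 2 < 1) (hJ : Jcost A B C Q R γ K ≠ 0) :
    ℓ₀ / (1 - γ * ‖μ‖ ^ 2) ≤ Jcost A B C Q R γ K := by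
  refine div_one_sub_le_trace_tsum hℓ₀ hγ (posSemidef_stageCost_sub hℓ₀ hQlb hRlb K) hμ hq ?_
  -- a non-summable `tsum` is `0`
  by_contra hsum
  exact hJ (by rw [Jcost, Pmat, tsum_eq_zero_of_not_summable hsum, trace_zero])

end LQR

theorem stmt7_general
    {n m p : ℕ}
    (A : Matrix (Fin n) (Fin n) ℝ) (B : Matrix (Fin n) (Fin m) ℝ) (C : Matrix (Fin p) (Fin n) ℝ)
    (Q : Matrix (Fin n) (Fin n) ℝ) (R : Matrix (Fin m) (Fin m) ℝ)
    (ℓ₀ : ℝ) (hℓ₀ : 0 < ℓ₀)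
    (hQlb : (Q - ℓ₀ • (1 : Matrix (Fin n) (Fin n) ℝ)).PosSemidef)
    (hRlb : (R - ℓ₀ • (1 : Matrix (Fin m) (Fin m) ℝ)).PosSemidef)
    (γ : ℝ)
    (K : Matrix (Fin m) (Fin p) ℝ) (hK : inS A B C γ K)
    (hJ : ℓ₀ < Jcost A B C Q R γ K)
    (γ' : ℝ) (hγ'pos : 0 < γ')
    (hγ'lt : γ' < (1 + ℓ₀ / (Jcost A B C Q R γ K - ℓ₀)) * γ) :
    Real.sqrt γ' * specRad (Acl A B C K) < 1 := by
  have hγpos : 0 < γ := by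
    have : 0 < 1 + ℓ₀ / (Jcost A B C Q R γ K - ℓ₀) := by have := sub_pos.2 hJ; positivity
    exact pos_of_mul_pos_right (hγ'pos.trans hγ'lt) this.le
  have hsqrt : 0 < Real.sqrt γ' := Real.sqrt_pos.2 hγ'pos
  rw [← lt_div_iff₀' hsqrt]
  refine specRad_lt_of_forall_norm_lt _ (by positivity) fun μ hμ => ?_
  rw [lt_div_iff₀' hsqrt, ← sq_lt_one_iff₀ (by positivity), mul_pow, Real.sq_sqrt hγ'pos.le]
  have hq : γ * ‖μ‖ ^ 2 < 1 := by
    have := (mul_le_mul_of_nonneg_left (norm_le_specRad _ hμ) (Real.sqrt_nonneg γ)).trans_lt hK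
    rwa [← sq_lt_one_iff₀ (by positivity), mul_pow, Real.sq_sqrt hγpos.le] at this
  exact mul_lt_one_of_lt_one_add_div_mul hJ (sq_nonneg _) hq
    (div_one_sub_le_Jcost hℓ₀.le hQlb hRlb hγpos.le hμ hq (hℓ₀.trans hJ).ne') hγ'lt

/-- if `γ' < (1 + α)γ` with `α = ℓ₀/(J_γ(K) − ℓ₀)` then
`√γ'·ρ(A − BKC) < 1`. -/
theorem stmt7
    {n m p : ℕ} (hn : 1 ≤ n) (hm : 1 ≤ m) (hp : 1 ≤ p)
    (A : Matrix (Fin n) (Fin n) ℝ) (B : Matrix (Fin n) (Fin m) ℝ) (C : Matrix (Fin p) (Fin n) ℝ)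
    (Q : Matrix (Fin n) (Fin n) ℝ) (R : Matrix (Fin m) (Fin m) ℝ)
    (hQsymm : Q.IsSymm) (hRsymm : R.IsSymm)
    (ℓ₀ ℓ₁ ψ φ : ℝ) (hℓ₀ : 0 < ℓ₀) (hℓ₀₁ : ℓ₀ ≤ ℓ₁) (hψ : 1 ≤ ψ) (hφ : 1 ≤ φ)
    (hQlb : (Q - ℓ₀ • (1 : Matrix (Fin n) (Fin n) ℝ)).PosSemidef)
    (hQub : (ℓ₁ • (1 : Matrix (Fin n) (Fin n) ℝ) - Q).PosSemidef)
    (hRlb : (R - ℓ₀ • (1 : Matrix (Fin m) (Fin m) ℝ)).PosSemidef)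
    (hRub : (ℓ₁ • (1 : Matrix (Fin m) (Fin m) ℝ) - R).PosSemidef)
    (hB : spNorm B ≤ ψ) (hC : spNorm C ≤ φ)
    (γ : ℝ) (hγ : γ ∈ Set.Ioc (0 : ℝ) 1)
    (K : Matrix (Fin m) (Fin p) ℝ) (hK : inS A B C γ K)
    (hJ : ℓ₀ < Jcost A B C Q R γ K)
    (γ' : ℝ) (hγ'pos : 0 < γ')
    (hγ'lt : γ' < (1 + ℓ₀ / (Jcost A B C Q R γ K - ℓ₀)) * γ) :
    Real.sqrt γ' * specRad (Acl A B C K) < 1 :=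
  stmt7_general A B C Q R ℓ₀ hℓ₀ hQlb hRlb γ K hK hJ γ' hγ'pos hγ'lt
end

section
/- Let γ ∈ (0,1], ν > 0, K ∈ S_γ(ν), d > 0, and let x₀ ∈ ℝⁿ satisfy ‖x₀‖ ≤ d. Define the damped closed-loop trajectory x_t = (√γ(A − BKC))^t x₀ for t ∈ ℕ. Then for every t ∈ ℕ, ‖x_t‖² ≤ (1 − ℓ₀/ν)^t · ν d²/ℓ₀. -/
open Matrix

/-! With `M = √γ (A − BKC)` and `S = Q + CᵀKᵀRKC ⪰ ℓ₀ I`, Gelfand's formula turns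
`√γ ρ(A − BKC) < 1` into geometric decay of `‖Mᵗ‖`, so `P = Σₜ (Mᵀ)ᵗ S Mᵗ = P_K(γ)` converges,
is positive semidefinite and solves `P = S + MᵀPM`. Hence `V x = xᵀPx` is a Lyapunov function:
`ℓ₀ ‖x‖² ≤ V x ≤ Tr P ‖x‖² ≤ ν ‖x‖²` and `V (Mx) = V x − xᵀSx ≤ (1 − ℓ₀/ν) V x`, which gives
`ℓ₀ ‖x_t‖² ≤ V x_t ≤ (1 − ℓ₀/ν)ᵗ V x₀ ≤ (1 − ℓ₀/ν)ᵗ ν d²`. -/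

open Matrix Filter Topology

theorem tsum_pow_mul_mul_pow_eq {R : Type*} [Ring R] [TopologicalSpace R] [IsTopologicalRing R]
    [T2Space R] {a b c : R} (h : Summable fun t : ℕ => b ^ t * c * a ^ t) :
    ∑' t : ℕ, b ^ t * c * a ^ t = c + b * (∑' t : ℕ, b ^ t * c * a ^ t) * a := by
  conv_lhs => rw [h.tsum_eq_zero_add]
  rw [← h.tsum_mul_left, ← (h.mul_left b).tsum_mul_right]
  simp only [pow_zero, one_mul, mul_one, pow_succ' b, pow_succ a, mul_assoc]

namespace Matrix

variable {ι : Type*} [Fintype ι]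

theorem isClosed_setOf_posSemidef : IsClosed {X : Matrix ι ι ℝ | X.PosSemidef} := by
  simp only [posSemidef_iff_dotProduct_mulVec, IsHermitian, conjTranspose_eq_transpose_of_trivial,
    star_trivial, Set.ofPred_and, Set.ofPred_forall]
  exact (isClosed_eq continuous_id.matrix_transpose continuous_id).inter
    (isClosed_iInter fun x => isClosed_le continuous_const
      (continuous_const.dotProduct (continuous_id.matrix_mulVec continuous_const)))

theorem posSemidef_tsum {f : ℕ → Matrix ι ι ℝ} (hf : ∀ t, (f t).PosSemidef) :
    (∑' t, f t).PosSemidef := by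
  by_cases h : Summable f
  · exact isClosed_setOf_posSemidef.mem_of_tendsto h.hasSum.tendsto_sum_nat
      (Eventually.of_forall fun N => posSemidef_sum _ fun t _ => hf t)
  · rw [tsum_eq_zero_of_not_summable h]
    exact PosSemidef.zero

theorem PosSemidef.dotProduct_mulVec_le_trace_mul {P : Matrix ι ι ℝ} (hP : P.PosSemidef)
    (x : ι → ℝ) : x ⬝ᵥ (P *ᵥ x) ≤ P.trace * (x ⬝ᵥ x) := by
  obtain ⟨k, v, rfl⟩ := posSemidef_iff_eq_sum_vecMulVec.mp hP
  simp only [star_trivial, sum_mulVec, dotProduct_sum, trace_sum, Finset.sum_mul,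
    vecMulVec_mulVec, trace_vecMulVec]
  refine Finset.sum_le_sum fun i _ => ?_
  rw [dotProduct_smul, MulOpposite.smul_eq_mul_unop, MulOpposite.unop_op, dotProduct_comm x, ← sq]
  simpa only [dotProduct, sq] using Finset.sum_mul_sq_le_sq_mul_sq Finset.univ (v i) x

variable [DecidableEq ι] {M P S : Matrix ι ι ℝ} {ℓ ν : ℝ}

omit [Fintype ι] in
theorem PosSemidef.of_sub_smul_one (hS : (S - ℓ • 1).PosSemidef) (hℓ : 0 ≤ ℓ) : S.PosSemidef := by
  simpa using hS.add (PosSemidef.one.smul hℓ)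

theorem PosSemidef.transpose_pow_mul_mul_pow (hS : S.PosSemidef) (M : Matrix ι ι ℝ) (t : ℕ) :
    (Mᵀ ^ t * S * M ^ t).PosSemidef := by
  simpa [conjTranspose_eq_transpose_of_trivial, transpose_pow] using
    hS.conjTranspose_mul_mul_same (M ^ t)

theorem mul_dotProduct_self_le_dotProduct_mulVec (hS : (S - ℓ • 1).PosSemidef) (x : ι → ℝ) :
    ℓ * (x ⬝ᵥ x) ≤ x ⬝ᵥ (S *ᵥ x) := by
  have := hS.dotProduct_mulVec_nonneg x
  rw [star_trivial, sub_mulVec, smul_mulVec, one_mulVec, dotProduct_sub, dotProduct_smul,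
    smul_eq_mul] at this
  linarith

omit [DecidableEq ι] in
theorem dotProduct_transpose_mul_mul_mulVec (M P : Matrix ι ι ℝ) (x : ι → ℝ) :
    x ⬝ᵥ ((Mᵀ * P * M) *ᵥ x) = (M *ᵥ x) ⬝ᵥ (P *ᵥ (M *ᵥ x)) := by
  rw [← mulVec_mulVec, ← mulVec_mulVec, dotProduct_mulVec, vecMul_transpose]

section Lyapunov

variable (hP : P.PosSemidef) (hPeq : P = S + Mᵀ * P * M)
include hP hPeq

theorem mul_dotProduct_self_le_of_lyapunov (hS : (S - ℓ • 1).PosSemidef) (x : ι → ℝ) :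
    ℓ * (x ⬝ᵥ x) ≤ x ⬝ᵥ (P *ᵥ x) := by
  have hVM := hP.dotProduct_mulVec_nonneg (M *ᵥ x)
  rw [star_trivial, ← dotProduct_transpose_mul_mul_mulVec] at hVM
  calc ℓ * (x ⬝ᵥ x) ≤ x ⬝ᵥ (S *ᵥ x) := mul_dotProduct_self_le_dotProduct_mulVec hS x
    _ ≤ x ⬝ᵥ (S *ᵥ x) + x ⬝ᵥ ((Mᵀ * P * M) *ᵥ x) := le_add_of_nonneg_right hVM
    _ = x ⬝ᵥ (P *ᵥ x) := by rw [← dotProduct_add, ← add_mulVec, ← hPeq]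

theorem le_trace_of_lyapunov [Nonempty ι] (hS : (S - ℓ • 1).PosSemidef) : ℓ ≤ P.trace := by
  obtain ⟨i⟩ := ‹Nonempty ι›
  have he : Pi.single i (1 : ℝ) ⬝ᵥ Pi.single i 1 = 1 := by simp
  have := (mul_dotProduct_self_le_of_lyapunov hP hPeq hS _).trans
    (hP.dotProduct_mulVec_le_trace_mul (Pi.single i 1))
  rwa [he, mul_one, mul_one] at this

theorem dotProduct_mulVec_mulVec_le_of_lyapunov (hℓ : 0 ≤ ℓ) (hS : (S - ℓ • 1).PosSemidef)
    (hν : P.trace ≤ ν) (hν0 : 0 < ν) (x : ι → ℝ) :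
    (M *ᵥ x) ⬝ᵥ (P *ᵥ (M *ᵥ x)) ≤ (1 - ℓ / ν) * (x ⬝ᵥ (P *ᵥ x)) := by
  have hstep : (M *ᵥ x) ⬝ᵥ (P *ᵥ (M *ᵥ x)) = x ⬝ᵥ (P *ᵥ x) - x ⬝ᵥ (S *ᵥ x) := by
    conv_rhs => rw [hPeq]
    rw [add_mulVec, dotProduct_add, dotProduct_transpose_mul_mul_mulVec, add_sub_cancel_left]
  have hupper : ℓ / ν * (x ⬝ᵥ (P *ᵥ x)) ≤ ℓ * (x ⬝ᵥ x) :=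
    calc ℓ / ν * (x ⬝ᵥ (P *ᵥ x)) ≤ ℓ / ν * (ν * (x ⬝ᵥ x)) := by
          gcongr
          exact (hP.dotProduct_mulVec_le_trace_mul x).trans
            (mul_le_mul_of_nonneg_right hν (Finset.sum_nonneg fun i _ => mul_self_nonneg (x i)))
      _ = ℓ * (x ⬝ᵥ x) := by field_simp
  linarith [mul_dotProduct_self_le_dotProduct_mulVec hS x]

theorem dotProduct_self_pow_mulVec_le_of_lyapunov [Nonempty ι] (hℓ : 0 < ℓ)
    (hS : (S - ℓ • 1).PosSemidef) (hν : P.trace ≤ ν) {x : ι → ℝ} {D : ℝ} (hx : x ⬝ᵥ x ≤ D)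
    (t : ℕ) : (M ^ t *ᵥ x) ⬝ᵥ (M ^ t *ᵥ x) ≤ (1 - ℓ / ν) ^ t * (ν * D / ℓ) := by
  have hℓν : ℓ ≤ ν := (le_trace_of_lyapunov hP hPeq hS).trans hν
  have hν0 : 0 < ν := hℓ.trans_le hℓν
  have hβ : 0 ≤ 1 - ℓ / ν := sub_nonneg.mpr ((div_le_one hν0).mpr hℓν)
  have hdecay : ∀ t : ℕ, (M ^ t *ᵥ x) ⬝ᵥ (P *ᵥ (M ^ t *ᵥ x)) ≤
      (1 - ℓ / ν) ^ t * (x ⬝ᵥ (P *ᵥ x)) := by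
    intro t
    induction t with
    | zero => simp
    | succ t ih =>
      rw [pow_succ' M, ← mulVec_mulVec, pow_succ' (1 - ℓ / ν), mul_assoc]
      exact (dotProduct_mulVec_mulVec_le_of_lyapunov hP hPeq hℓ.le hS hν hν0 _).trans
        (mul_le_mul_of_nonneg_left ih hβ)
  have hV0 : x ⬝ᵥ (P *ᵥ x) ≤ ν * D :=
    (hP.dotProduct_mulVec_le_trace_mul x).trans
      (mul_le_mul hν hx (Finset.sum_nonneg fun i _ => mul_self_nonneg (x i)) hν0.le)
  rw [← mul_div_assoc, le_div_iff₀' hℓ]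
  exact (mul_dotProduct_self_le_of_lyapunov hP hPeq hS _).trans
    ((hdecay t).trans (mul_le_mul_of_nonneg_left hV0 (pow_nonneg hβ t)))

end Lyapunov

end Matrix

theorem eventually_norm_pow_le_of_spectralRadius_lt {A : Type*} [NormedRing A]
    [NormedAlgebra ℂ A] [CompleteSpace A] {a : A} {r : ℝ}
    (h : spectralRadius ℂ a < ENNReal.ofReal r) : ∀ᶠ t : ℕ in atTop, ‖a ^ t‖ ≤ r ^ t := by
  filter_upwards [(spectrum.pow_norm_pow_one_div_tendsto_nhds_spectralRadius a).eventually
    (gt_mem_nhds h), eventually_ne_atTop 0] with t ht ht0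
  rw [ENNReal.ofReal_lt_ofReal_iff', one_div] at ht
  calc ‖a ^ t‖ = (‖a ^ t‖ ^ (t⁻¹ : ℝ)) ^ t := (Real.rpow_inv_natCast_pow (norm_nonneg _) ht0).symm
    _ ≤ r ^ t := pow_le_pow_left₀ (by positivity) ht.1.le t

section Frobenius

-- The Frobenius norm is submultiplicative, invariant under transposition and under `Matrix.map`
-- by the isometry `ℝ → ℂ`.
attribute [local instance] Matrix.frobeniusNormedAddCommGroup Matrix.frobeniusNormedSpace
  Matrix.frobeniusNormedRing Matrix.frobeniusNormedAlgebra

theorem summable_transpose_pow_mul_mul_pow {ι : Type*} [Fintype ι] [DecidableEq ι]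
    {M : Matrix ι ι ℝ} (S : Matrix ι ι ℝ) {r : ℝ} (hr0 : 0 ≤ r) (hr1 : r < 1)
    (hM : ∀ᶠ t : ℕ in atTop, ‖M ^ t‖ ≤ r ^ t) : Summable fun t : ℕ => Mᵀ ^ t * S * M ^ t := by
  refine .of_norm_bounded_eventually_nat
    ((summable_geometric_of_lt_one (sq_nonneg r) (by nlinarith)).mul_left ‖S‖) ?_
  filter_upwards [hM] with t ht
  calc ‖Mᵀ ^ t * S * M ^ t‖ ≤ ‖(M ^ t)ᵀ‖ * ‖S‖ * ‖M ^ t‖ := by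
        rw [transpose_pow]; exact norm_mul₃_le
    _ = ‖S‖ * ‖M ^ t‖ ^ 2 := by rw [frobenius_norm_transpose]; ring
    _ ≤ ‖S‖ * (r ^ 2) ^ t := by
        rw [← pow_mul, mul_comm 2, pow_mul]; gcongr

variable {n : ℕ}

theorem specRad_nonneg (M : Matrix (Fin n) (Fin n) ℝ) : 0 ≤ specRad M :=
  Real.sSup_nonneg fun _ ⟨_, _, hr⟩ => hr ▸ norm_nonneg _

theorem spectralRadius_map_le_specRad (M : Matrix (Fin n) (Fin n) ℝ) :
    spectralRadius ℂ (M.map (algebraMap ℝ ℂ)) ≤ ENNReal.ofReal (specRad M) := by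
  obtain ⟨c, hc⟩ := isBounded_iff_forall_norm_le.mp
    (spectrum.isBounded (𝕜 := ℂ) (M.map (algebraMap ℝ ℂ)))
  refine iSup₂_le fun μ hμ => ?_
  rw [← ENNReal.ofReal_coe_nnreal, coe_nnnorm]
  exact ENNReal.ofReal_le_ofReal (le_csSup ⟨c, fun _ ⟨μ', hμ', hr⟩ => hr ▸ hc μ' hμ'⟩ ⟨μ, hμ, rfl⟩)

theorem eventually_norm_pow_le_of_specRad_lt {M : Matrix (Fin n) (Fin n) ℝ} {r : ℝ}
    (h : specRad M < r) : ∀ᶠ t : ℕ in atTop, ‖M ^ t‖ ≤ r ^ t := by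
  have hlt : spectralRadius ℂ (M.map (algebraMap ℝ ℂ)) < ENNReal.ofReal r :=
    (spectralRadius_map_le_specRad M).trans_lt
      (ENNReal.ofReal_lt_ofReal_iff'.mpr ⟨h, (specRad_nonneg M).trans_lt h⟩)
  filter_upwards [eventually_norm_pow_le_of_spectralRadius_lt hlt] with t ht
  rwa [← Matrix.map_pow, frobenius_norm_map_eq _ _ fun x => by simp] at ht

theorem summable_smul_of_mul_specRad_lt_one {A : Matrix (Fin n) (Fin n) ℝ} {c : ℝ} (hc : 0 ≤ c)
    (h : c * specRad A < 1) (S : Matrix (Fin n) (Fin n) ℝ) :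
    Summable fun t : ℕ => (c • A)ᵀ ^ t * S * (c • A) ^ t := by
  obtain ⟨δ, hδ, hcδ⟩ := exists_pos_mul_lt (sub_pos.mpr h) c
  refine summable_transpose_pow_mul_mul_pow S (r := c * (specRad A + δ))
    (mul_nonneg hc (by linarith [specRad_nonneg A])) (by rw [mul_add]; linarith) ?_
  filter_upwards [eventually_norm_pow_le_of_specRad_lt (lt_add_of_pos_right (specRad A) hδ)]
    with t ht
  rw [smul_pow, norm_smul, mul_pow, Real.norm_of_nonneg (pow_nonneg hc t)]
  gcongr

end Frobenius

theorem vecNorm_sq {k : ℕ} (x : Fin k → ℝ) : vecNorm x ^ 2 = x ⬝ᵥ x := by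
  rw [vecNorm, Real.sq_sqrt (Finset.sum_nonneg fun i _ => sq_nonneg _)]
  simp [dotProduct, sq]

theorem posSemidef_stageCost_sub_smul_one {ι κ μ : Type*} [Fintype ι] [DecidableEq ι] [Fintype κ]
    [DecidableEq κ] [Fintype μ] {Q : Matrix ι ι ℝ} {R : Matrix κ κ ℝ} {ℓ : ℝ}
    (hQ : (Q - ℓ • 1).PosSemidef) (hR : (R - ℓ • 1).PosSemidef) (hℓ : 0 ≤ ℓ)
    (K : Matrix κ μ ℝ) (C : Matrix μ ι ℝ) :
    (Q + Cᵀ * Kᵀ * R * K * C - ℓ • 1).PosSemidef := by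
  have hKC := (hR.of_sub_smul_one hℓ).conjTranspose_mul_mul_same (K * C)
  rw [conjTranspose_mul, conjTranspose_eq_transpose_of_trivial,
    conjTranspose_eq_transpose_of_trivial] at hKC
  convert hQ.add hKC using 1
  simp only [Matrix.mul_assoc]
  abel

theorem Pmat_eq_tsum {n m p : ℕ} (A : Matrix (Fin n) (Fin n) ℝ) (B : Matrix (Fin n) (Fin m) ℝ)
    (C : Matrix (Fin p) (Fin n) ℝ) (Q : Matrix (Fin n) (Fin n) ℝ) (R : Matrix (Fin m) (Fin m) ℝ)
    (K : Matrix (Fin m) (Fin p) ℝ) {γ : ℝ} (hγ : 0 ≤ γ) :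
    Pmat A B C Q R γ K = ∑' t : ℕ, (Real.sqrt γ • Acl A B C K)ᵀ ^ t *
      (Q + Cᵀ * Kᵀ * R * K * C) * (Real.sqrt γ • Acl A B C K) ^ t := by
  refine tsum_congr fun t => ?_
  rw [transpose_smul, smul_pow, smul_pow, Matrix.smul_mul, Matrix.smul_mul, Matrix.mul_smul,
    smul_smul, ← mul_pow, Real.mul_self_sqrt hγ]

theorem stmt9_general
    {n m p : ℕ} (hn : 1 ≤ n)
    (A : Matrix (Fin n) (Fin n) ℝ) (B : Matrix (Fin n) (Fin m) ℝ) (C : Matrix (Fin p) (Fin n) ℝ)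
    (Q : Matrix (Fin n) (Fin n) ℝ) (R : Matrix (Fin m) (Fin m) ℝ)
    (ℓ₀ : ℝ) (hℓ₀ : 0 < ℓ₀)
    (hQlb : (Q - ℓ₀ • (1 : Matrix (Fin n) (Fin n) ℝ)).PosSemidef)
    (hRlb : (R - ℓ₀ • (1 : Matrix (Fin m) (Fin m) ℝ)).PosSemidef)
    (γ : ℝ) (hγ : γ ∈ Set.Ioc (0 : ℝ) 1) (ν : ℝ)
    (K : Matrix (Fin m) (Fin p) ℝ)
    (hK : inS A B C γ K) (hKν : Jcost A B C Q R γ K ≤ ν)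
    (d : ℝ) (x₀ : Fin n → ℝ) (hx₀ : vecNorm x₀ ≤ d) :
    ∀ t : ℕ,
      vecNorm ((Real.sqrt γ • Acl A B C K) ^ t *ᵥ x₀) ^ 2 ≤
        (1 - ℓ₀ / ν) ^ t * (ν * d ^ 2 / ℓ₀) := by
  intro t
  have : Nonempty (Fin n) := ⟨⟨0, hn⟩⟩
  set M := Real.sqrt γ • Acl A B C K
  set S := Q + Cᵀ * Kᵀ * R * K * C
  have hS : (S - ℓ₀ • 1).PosSemidef := posSemidef_stageCost_sub_smul_one hQlb hRlb hℓ₀.le K C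
  have hsum : Summable fun t : ℕ => Mᵀ ^ t * S * M ^ t :=
    summable_smul_of_mul_specRad_lt_one (Real.sqrt_nonneg γ) hK S
  have hP : (∑' t : ℕ, Mᵀ ^ t * S * M ^ t).PosSemidef :=
    posSemidef_tsum ((hS.of_sub_smul_one hℓ₀.le).transpose_pow_mul_mul_pow M)
  rw [Jcost, Pmat_eq_tsum A B C Q R K hγ.1.le] at hKν
  have hx : x₀ ⬝ᵥ x₀ ≤ d ^ 2 := by
    rw [← vecNorm_sq]; exact pow_le_pow_left₀ (Real.sqrt_nonneg _) hx₀ 2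
  rw [vecNorm_sq]
  exact dotProduct_self_pow_mulVec_le_of_lyapunov hP (tsum_pow_mul_mul_pow_eq hsum) hℓ₀ hS hKν hx t

/-- exponential decay of the damped closed-loop trajectory:
`‖x_t‖² ≤ (1 − ℓ₀/ν)^t · νd²/ℓ₀`. -/
theorem stmt9
    {n m p : ℕ} (hn : 1 ≤ n) (hm : 1 ≤ m) (hp : 1 ≤ p)
    (A : Matrix (Fin n) (Fin n) ℝ) (B : Matrix (Fin n) (Fin m) ℝ) (C : Matrix (Fin p) (Fin n) ℝ)
    (Q : Matrix (Fin n) (Fin n) ℝ) (R : Matrix (Fin m) (Fin m) ℝ)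
    (hQsymm : Q.IsSymm) (hRsymm : R.IsSymm)
    (ℓ₀ ℓ₁ ψ φ : ℝ) (hℓ₀ : 0 < ℓ₀) (hℓ₀₁ : ℓ₀ ≤ ℓ₁) (hψ : 1 ≤ ψ) (hφ : 1 ≤ φ)
    (hQlb : (Q - ℓ₀ • (1 : Matrix (Fin n) (Fin n) ℝ)).PosSemidef)
    (hQub : (ℓ₁ • (1 : Matrix (Fin n) (Fin n) ℝ) - Q).PosSemidef)
    (hRlb : (R - ℓ₀ • (1 : Matrix (Fin m) (Fin m) ℝ)).PosSemidef)
    (hRub : (ℓ₁ • (1 : Matrix (Fin m) (Fin m) ℝ) - R).PosSemidef)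
    (hB : spNorm B ≤ ψ) (hC : spNorm C ≤ φ)
    (γ : ℝ) (hγ : γ ∈ Set.Ioc (0 : ℝ) 1) (ν : ℝ) (hν : 0 < ν)
    (K : Matrix (Fin m) (Fin p) ℝ)
    (hK : inS A B C γ K) (hKν : Jcost A B C Q R γ K ≤ ν)
    (d : ℝ) (hd : 0 < d) (x₀ : Fin n → ℝ) (hx₀ : vecNorm x₀ ≤ d) :
    ∀ t : ℕ,
      vecNorm ((Real.sqrt γ • Acl A B C K) ^ t *ᵥ x₀) ^ 2 ≤
        (1 - ℓ₀ / ν) ^ t * (ν * d ^ 2 / ℓ₀) :=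
  stmt9_general hn A B C Q R ℓ₀ hℓ₀ hQlb hRlb γ hγ ν K hK hKν d x₀ hx₀
end
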